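/- arXiv:2203.16752 — 4 statements merged into one kernel-verified Lean document; each statement's English description precedes it below -/
import Mathlib

section
/- Let d ≥ 2, m ≥ 1, and f ∈ 𝒫̇_m(ℝ^d). Then u := Δ_D^{-1} f satisfies Δu = f on ℝ^d and u(x,0) = 0 for all x ∈ ℝ^{d-1}. -/
open MvPolynomial

noncomputable section

/-- The horizontal Laplacian `Δ' = ∂_1² + ⋯ + ∂_{d-1}²` acting on polynomials on
`ℝ^d = ℝ^{n+1}`, where the last variable is `y`. -/
def lapX (n : ℕ) : Module.End ℝ (MvPolynomial (Fin (n + 1)) ℝ) :=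
  ∑ i : Fin n,
    ((pderiv (R := ℝ) i.castSucc).toLinearMap ∘ₗ (pderiv (R := ℝ) i.castSucc).toLinearMap)

/-- The full Laplacian `Δ = Δ' + ∂_y²`. -/
def lapFull (n : ℕ) : Module.End ℝ (MvPolynomial (Fin (n + 1)) ℝ) :=
  lapX n +
    ((pderiv (R := ℝ) (Fin.last n)).toLinearMap ∘ₗ (pderiv (R := ℝ) (Fin.last n)).toLinearMap)

/-- The operator `Δ_D^{-1}`, determined on a monomial `x^α y^l` by
`Δ_D^{-1}(x^α y^l) = Σ_{j≥0} ((-1)^j l!/(l+2j+2)!) ((Δ')^j x^α) y^{l+2j+2}`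
(a finite sum: the terms with `2j > |α|` vanish, so truncating the sum at the total
degree of the monomial loses nothing), extended linearly. -/
def deltaDInv (n : ℕ) (p : MvPolynomial (Fin (n + 1)) ℝ) : MvPolynomial (Fin (n + 1)) ℝ :=
  ∑ σ ∈ p.support,
    ∑ j ∈ Finset.range ((σ.sum fun _ e => e) + 1),
      (coeff σ p * ((-1 : ℝ) ^ j * ((σ (Fin.last n)).factorial : ℝ) /
          ((σ (Fin.last n) + 2 * j + 2).factorial : ℝ))) •
        (((lapX n) ^ j) (monomial (σ.erase (Fin.last n)) (1 : ℝ)) *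
          (X (Fin.last n)) ^ (σ (Fin.last n) + 2 * j + 2))

theorem pderiv_swap {σ : Type*} (i j : σ) (h : i ≠ j) (p : MvPolynomial σ ℝ) :
    pderiv i (pderiv j p) = pderiv j (pderiv i p) := by
  induction p using MvPolynomial.induction_on' with
  | monomial s a =>
    classical
    simp only [pderiv_monomial]
    have h1 : (s - Finsupp.single j 1 : σ →₀ ℕ) i = s i := by
      simp [Finsupp.single_apply, h.symm]
    have h2 : (s - Finsupp.single i 1 : σ →₀ ℕ) j = s j := by
      simp [Finsupp.single_apply, h]
    have h3 : (s - Finsupp.single j 1 - Finsupp.single i 1 : σ →₀ ℕ)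
        = s - Finsupp.single i 1 - Finsupp.single j 1 := by
      ext x
      simp only [Finsupp.tsub_apply, Finsupp.single_apply]
      split <;> split <;> omega
    rw [h1, h2, h3, mul_right_comm]
  | add p q hp hq => simp [hp, hq]

theorem lapX_mul_ypow (n : ℕ) (p : MvPolynomial (Fin (n+1)) ℝ) (k : ℕ) :
    lapX n (p * X (Fin.last n) ^ k) = lapX n p * X (Fin.last n) ^ k := by
  have hy : ∀ i : Fin n, pderiv (R := ℝ) i.castSucc (X (Fin.last n) ^ k) = 0 := by
    intro i
    rw [pderiv_pow, pderiv_X_of_ne (Fin.castSucc_lt_last i).ne', mul_zero]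
  simp only [lapX, LinearMap.sum_apply, LinearMap.comp_apply, Derivation.coeFn_coe]
  rw [Finset.sum_mul]
  refine Finset.sum_congr rfl fun i _ => ?_
  rw [pderiv_mul, hy i, mul_zero, add_zero, pderiv_mul, hy i, mul_zero, add_zero]

theorem pderiv_last_lapX (n : ℕ) (p : MvPolynomial (Fin (n+1)) ℝ) :
    pderiv (Fin.last n) (lapX n p) = lapX n (pderiv (Fin.last n) p) := by
  simp only [lapX, LinearMap.sum_apply, LinearMap.comp_apply, Derivation.coeFn_coe]
  rw [map_sum]
  refine Finset.sum_congr rfl fun i _ => ?_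
  have hne : Fin.last n ≠ i.castSucc := (Fin.castSucc_lt_last i).ne'
  rw [pderiv_swap _ _ hne, pderiv_swap _ _ hne]

theorem pderiv_last_lapX_pow' (n : ℕ) (j : ℕ) (p : MvPolynomial (Fin (n+1)) ℝ) :
    pderiv (Fin.last n) (((lapX n) ^ j) p) = ((lapX n) ^ j) (pderiv (Fin.last n) p) := by
  induction j generalizing p with
  | zero => simp
  | succ j ih =>
    rw [pow_succ, Module.End.mul_apply, ih, pderiv_last_lapX, ← Module.End.mul_apply, ← pow_succ]

theorem pderiv_last_lapX_pow (n : ℕ) (j : ℕ) (p : MvPolynomial (Fin (n+1)) ℝ)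
    (hp : pderiv (Fin.last n) p = 0) :
    pderiv (Fin.last n) (((lapX n) ^ j) p) = 0 := by
  rw [pderiv_last_lapX_pow', hp, map_zero]

theorem pderiv_sq_mul_ypow (n : ℕ) (p : MvPolynomial (Fin (n+1)) ℝ) (t : ℕ)
    (hp : pderiv (Fin.last n) p = 0) :
    pderiv (Fin.last n) (pderiv (Fin.last n) (p * X (Fin.last n) ^ (t+2)))
      = (((t+2)*(t+1) : ℕ) : ℝ) • (p * X (Fin.last n) ^ t) := by
  rw [pderiv_mul, hp, zero_mul, zero_add, pderiv_pow, pderiv_X_self, mul_one]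
  rw [show (t+2)-1 = t+1 from rfl]
  rw [pderiv_mul, hp, zero_mul, zero_add, pderiv_mul, pderiv_pow, pderiv_X_self, mul_one]
  rw [show (t+1)-1 = t from rfl]
  have h0 : pderiv (R := ℝ) (Fin.last n) ((t + 2 : ℕ) : MvPolynomial (Fin (n+1)) ℝ) = 0 := by
    rw [← C_eq_coe_nat, pderiv_C]
  rw [h0, smul_eq_C_mul,
    show ((((t+2)*(t+1) : ℕ) : ℝ)) = (((t+2)*(t+1) : ℕ) : ℝ) from rfl,
    C_eq_coe_nat]
  push_cast
  ring

theorem degree_fin {N : ℕ} (d : Fin N →₀ ℕ) : d.degree = ∑ i, d i :=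
  Finset.sum_subset (Finset.subset_univ _) (fun x _ hx => Finsupp.notMem_support_iff.mp hx)

theorem degree_sub_single {N : ℕ} (σ : Fin N →₀ ℕ) (i : Fin N) (hi : σ i ≠ 0) :
    (σ - Finsupp.single i 1).degree = σ.degree - 1 := by
  rw [degree_fin, degree_fin]
  have h1 : (σ - Finsupp.single i 1 : Fin N →₀ ℕ) i = σ i - 1 := by
    simp [Finsupp.single_apply]
  have h2 : ∀ x ∈ Finset.univ.erase i, (σ - Finsupp.single i 1 : Fin N →₀ ℕ) x = σ x := by
    intro x hx
    have : i ≠ x := (Finset.mem_erase.mp hx).1.symm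
    simp [Finsupp.single_apply, this]
  have e1 : ∑ x, (σ - Finsupp.single i 1 : Fin N →₀ ℕ) x
      = (σ i - 1) + ∑ x ∈ Finset.univ.erase i, σ x := by
    rw [← Finset.add_sum_erase _ _ (Finset.mem_univ i), h1, Finset.sum_congr rfl h2]
  have e2 : ∑ x, σ x = σ i + ∑ x ∈ Finset.univ.erase i, σ x := by
    rw [← Finset.add_sum_erase _ _ (Finset.mem_univ i)]
  rw [e1, e2]
  omega

theorem hom_pderiv {N k : ℕ} (i : Fin N) (p : MvPolynomial (Fin N) ℝ)
    (h : p.IsHomogeneous (k+1)) : (pderiv i p).IsHomogeneous k := by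
  rw [← support_sum_monomial_coeff p, map_sum]
  apply IsHomogeneous.sum
  intro σ hσ
  rw [pderiv_monomial]
  by_cases hz : σ i = 0
  · rw [hz]; simpa using isHomogeneous_zero _ _ k
  · apply isHomogeneous_monomial
    have hd : σ.degree = k + 1 := by
      rw [Finsupp.degree_eq_weight_one]
      exact h (mem_support_iff.mp hσ)
    rw [degree_sub_single σ i hz, hd]
    omega

theorem hom_pderiv_zero {N : ℕ} (i : Fin N) (p : MvPolynomial (Fin N) ℝ)
    (h : p.IsHomogeneous 0) : pderiv i p = 0 := by
  rw [← support_sum_monomial_coeff p, map_sum]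
  apply Finset.sum_eq_zero
  intro σ hσ
  rw [pderiv_monomial]
  have hd : σ.degree = 0 := by
    rw [Finsupp.degree_eq_weight_one]
    exact h (mem_support_iff.mp hσ)
  have hz : σ = 0 := (Finsupp.degree_eq_zero_iff σ).mp hd
  simp [hz]

theorem lapX_hom (n : ℕ) {k : ℕ} (p : MvPolynomial (Fin (n+1)) ℝ) (h : p.IsHomogeneous (k+2)) :
    (lapX n p).IsHomogeneous k := by
  simp only [lapX, LinearMap.sum_apply, LinearMap.comp_apply, Derivation.coeFn_coe]
  exact IsHomogeneous.sum _ _ _ fun i _ => hom_pderiv _ _ (hom_pderiv _ _ h)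

theorem lapX_zero_of_lt (n : ℕ) {k : ℕ} (p : MvPolynomial (Fin (n+1)) ℝ) (h : p.IsHomogeneous k)
    (hk : k < 2) : lapX n p = 0 := by
  simp only [lapX, LinearMap.sum_apply, LinearMap.comp_apply, Derivation.coeFn_coe]
  apply Finset.sum_eq_zero
  intro i _
  interval_cases k
  · rw [hom_pderiv_zero _ _ h, map_zero]
  · rw [hom_pderiv_zero _ _ (hom_pderiv _ _ h)]

theorem lapX_pow_zero (n : ℕ) {k j : ℕ} (p : MvPolynomial (Fin (n+1)) ℝ) (h : p.IsHomogeneous k)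
    (hk : k < 2 * j) : ((lapX n) ^ j) p = 0 := by
  induction j generalizing p k with
  | zero => omega
  | succ j ih =>
    rw [pow_succ, Module.End.mul_apply]
    by_cases h2 : k < 2
    · rw [lapX_zero_of_lt n p h h2, map_zero]
    · obtain ⟨k', rfl⟩ : ∃ k', k = k' + 2 := ⟨k - 2, by omega⟩
      exact ih (lapX n p) (lapX_hom n p h) (by omega)

theorem key (n m : ℕ) (hm : 1 ≤ m) (a : ℝ) (σ : Fin (n+1) →₀ ℕ) (hσ : σ.degree = m) :
    lapFull n (∑ j ∈ Finset.range (m + 1),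
      (a * ((-1:ℝ) ^ j * ((σ (Fin.last n)).factorial : ℝ) /
          ((σ (Fin.last n) + 2 * j + 2).factorial : ℝ))) •
        (((lapX n) ^ j) (monomial (σ.erase (Fin.last n)) (1 : ℝ)) *
          (X (Fin.last n)) ^ (σ (Fin.last n) + 2 * j + 2)))
    = monomial σ a := by
  set l := σ (Fin.last n) with hl
  set q : ℕ → MvPolynomial (Fin (n+1)) ℝ :=
    fun j => ((lapX n) ^ j) (monomial (σ.erase (Fin.last n)) (1 : ℝ)) with hq
  have hDq : ∀ j, pderiv (Fin.last n) (q j) = 0 := by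
    intro j
    apply pderiv_last_lapX_pow
    rw [pderiv_monomial]
    simp [Finsupp.erase_same]
  have hqs : ∀ j, lapX n (q j) = q (j+1) := by
    intro j
    simp only [hq]
    rw [← Module.End.mul_apply, ← pow_succ']
  have hα : (σ.erase (Fin.last n)).degree + l = m := by
    rw [degree_fin, ← hσ, degree_fin]
    rw [← Finset.sum_erase_add _ _ (Finset.mem_univ (Fin.last n)),
        ← Finset.sum_erase_add _ _ (Finset.mem_univ (Fin.last n))]
    have h2 : ∀ x ∈ Finset.univ.erase (Fin.last n),
        (σ.erase (Fin.last n)) x = σ x := by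
      intro x hx
      exact Finsupp.erase_ne (Finset.mem_erase.mp hx).1
    rw [Finset.sum_congr rfl h2, Finsupp.erase_same, add_zero, hl]
  set g : ℕ → MvPolynomial (Fin (n+1)) ℝ :=
    fun j => (a * ((-1:ℝ) ^ j * (l.factorial : ℝ) / ((l + 2 * j).factorial : ℝ))) •
      (q j * X (Fin.last n) ^ (l + 2 * j)) with hg
  have hterm : ∀ j, lapFull n
      ((a * ((-1:ℝ) ^ j * (l.factorial : ℝ) / ((l + 2 * j + 2).factorial : ℝ))) •
        (q j * X (Fin.last n) ^ (l + 2 * j + 2))) = g j - g (j+1) := by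
    intro j
    set c : ℝ := a * ((-1:ℝ) ^ j * (l.factorial : ℝ) / ((l + 2 * j + 2).factorial : ℝ)) with hc
    have e1 : lapX n (c • (q j * X (Fin.last n) ^ (l + 2 * j + 2)))
        = c • (q (j+1) * X (Fin.last n) ^ (l + 2 * j + 2)) := by
      rw [map_smul, lapX_mul_ypow, hqs j]
    have e2 : pderiv (Fin.last n) (pderiv (Fin.last n)
        (c • (q j * X (Fin.last n) ^ (l + 2 * j + 2))))
        = (c * (((l + 2*j + 2) * (l + 2*j + 1) : ℕ) : ℝ)) •
          (q j * X (Fin.last n) ^ (l + 2 * j)) := by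
      rw [Derivation.map_smul, Derivation.map_smul, show l + 2*j + 2 = (l + 2*j) + 2 from rfl,
        pderiv_sq_mul_ypow n (q j) (l + 2*j) (hDq j), smul_smul]
    have hfull : ∀ z : MvPolynomial (Fin (n+1)) ℝ, lapFull n z
        = lapX n z + pderiv (Fin.last n) (pderiv (Fin.last n) z) := fun z => rfl
    rw [hfull, e1, e2]
    simp only [hg]
    have hexp : l + 2 * (j+1) = l + 2*j + 2 := by ring
    rw [hexp]
    have hs1 : c • (q (j+1) * X (Fin.last n) ^ (l + 2 * j + 2))
        = -((a * ((-1:ℝ) ^ (j+1) * (l.factorial : ℝ) / ((l + 2*j + 2).factorial : ℝ))) •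
          (q (j+1) * X (Fin.last n) ^ (l + 2*j + 2))) := by
      rw [← neg_smul]
      congr 1
      rw [hc]; ring
    have hs2 : (c * (((l + 2*j + 2) * (l + 2*j + 1) : ℕ) : ℝ))
        = a * ((-1:ℝ) ^ j * (l.factorial : ℝ) / ((l + 2 * j).factorial : ℝ)) := by
      rw [hc]
      have h1 : ((l + 2*j + 2).factorial : ℝ)
          = ((l + 2*j + 2) : ℕ) * ((l + 2*j + 1) : ℕ) * ((l + 2*j).factorial : ℝ) := by
        rw [show l + 2*j + 2 = (l + 2*j + 1) + 1 from rfl, Nat.factorial_succ,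
          show l + 2*j + 1 = (l + 2*j) + 1 from rfl, Nat.factorial_succ]
        push_cast
        ring
      have h2 : ((l + 2*j).factorial : ℝ) ≠ 0 := Nat.cast_ne_zero.mpr (Nat.factorial_ne_zero _)
      rw [h1]
      push_cast
      field_simp
    rw [hs1, hs2]
    abel
  rw [map_sum, Finset.sum_congr rfl (fun j (_ : j ∈ Finset.range (m+1)) => hterm j),
    Finset.sum_range_sub']
  have hgm : g (m+1) = 0 := by
    simp only [hg]
    have hz : q (m+1) = 0 := by
      apply lapX_pow_zero n _ (isHomogeneous_monomial (1:ℝ) rfl)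
      omega
    rw [hz, zero_mul, smul_zero]
  have hg0 : g 0 = monomial σ a := by
    simp only [hg, hq]
    simp only [pow_zero, mul_zero, add_zero, one_mul, Module.End.one_apply]
    rw [div_self (Nat.cast_ne_zero.mpr (Nat.factorial_ne_zero l)), mul_one]
    rw [hl, X_pow_eq_monomial, monomial_mul, mul_one, Finsupp.erase_add_single, smul_monomial,
      smul_eq_mul, mul_one]
  rw [hgm, hg0, sub_zero]

theorem sum_eq_degree {N : ℕ} (σ : Fin N →₀ ℕ) : (σ.sum fun _ e => e) = σ.degree := rfl


/-- for `f ∈ 𝒫̇_m(ℝ^d)` with `d ≥ 2`, `m ≥ 1`, the polynomial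
`u := Δ_D^{-1} f` satisfies `Δu = f` on `ℝ^d` and `u(x,0) = 0` for all `x ∈ ℝ^{d-1}`. -/
theorem stmt1 (n m : ℕ) (hn : 1 ≤ n) (hm : 1 ≤ m)
    (f : MvPolynomial (Fin (n + 1)) ℝ) (hf : f.IsHomogeneous m) :
    lapFull n (deltaDInv n f) = f ∧
      ∀ x : Fin n → ℝ, eval (Fin.snoc x 0) (deltaDInv n f) = 0 := by
  constructor
  · have step : lapFull n (deltaDInv n f) = ∑ σ ∈ f.support, monomial σ (coeff σ f) := by
      rw [deltaDInv, map_sum]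
      apply Finset.sum_congr rfl
      intro σ hσ
      have hd : σ.degree = m := by
        rw [Finsupp.degree_eq_weight_one]
        exact hf (mem_support_iff.mp hσ)
      rw [sum_eq_degree, hd]
      exact key n m hm (coeff σ f) σ hd
    rw [step, support_sum_monomial_coeff]
  · intro x
    rw [deltaDInv, map_sum]
    apply Finset.sum_eq_zero
    intro σ _
    rw [map_sum]
    apply Finset.sum_eq_zero
    intro j _
    have hz : ((Fin.snoc x 0 : Fin (n+1) → ℝ) (Fin.last n)) ^ (σ (Fin.last n) + 2 * j + 2)
        = 0 := by
      rw [Fin.snoc_last]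
      exact zero_pow (by omega)
    rw [smul_eq_C_mul, eval_mul, eval_mul, eval_pow, eval_X, hz, mul_zero, mul_zero]
end
end

section
/- Let d ≥ 2, m ≥ 1, and f ∈ 𝒫̇_m(ℝ^d). Let f₀ ∈ 𝒫̇_m(ℝ^d) denote the polynomial (x,y) ↦ f(x,0). Then ∂_y (Δ_D^{-1} f) = Δ_D^{-1} (∂_y f) + ∂_y (Δ_D^{-1} f₀). -/
open MvPolynomial

noncomputable section

/-- The substitution `y ↦ 0`: it sends `f(x,y)` to the polynomial `(x,y) ↦ f(x,0)`. -/
def setY0 (n : ℕ) : MvPolynomial (Fin (n + 1)) ℝ →ₐ[ℝ] MvPolynomial (Fin (n + 1)) ℝ :=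
  aeval (fun i => if i = Fin.last n then 0 else X i)

theorem pderiv_comm' {σ : Type*} [DecidableEq σ] (i j : σ) (p : MvPolynomial σ ℝ) :
    pderiv i (pderiv j p) = pderiv j (pderiv i p) := by
  induction p using MvPolynomial.induction_on' with
  | monomial s a =>
    by_cases h : i = j
    · subst h; rfl
    · simp only [pderiv_monomial]
      congr 1
      · rw [tsub_right_comm]
      · rw [Finsupp.tsub_apply, Finsupp.tsub_apply, Finsupp.single_eq_of_ne' h,
          Finsupp.single_eq_of_ne' (Ne.symm h)]
        push_cast [Nat.sub_zero]
        ring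
  | add p q hp hq => simp [hp, hq]

theorem pderiv_lapX (n : ℕ) (p : MvPolynomial (Fin (n + 1)) ℝ) :
    pderiv (Fin.last n) (lapX n p) = lapX n (pderiv (Fin.last n) p) := by
  simp only [lapX, LinearMap.sum_apply, LinearMap.comp_apply, Derivation.coeFn_coe, map_sum]
  refine Finset.sum_congr rfl fun i _ => ?_
  rw [pderiv_comm' (Fin.last n) i.castSucc, pderiv_comm' (Fin.last n) i.castSucc p]

theorem pderiv_lapX_pow (n j : ℕ) (p : MvPolynomial (Fin (n + 1)) ℝ) :
    pderiv (Fin.last n) ((lapX n ^ j) p) = (lapX n ^ j) (pderiv (Fin.last n) p) := by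
  induction j generalizing p with
  | zero => simp
  | succ j ih => simp only [pow_succ, Module.End.mul_apply, ih, pderiv_lapX]

theorem lapX_pow_monomial_eq_zero (n : ℕ) (j : ℕ) (α : Fin (n + 1) →₀ ℕ) (c : ℝ)
    (h : (α.sum fun _ e => e) < 2 * j) : (lapX n ^ j) (monomial α c) = 0 := by
  induction j generalizing α c with
  | zero => omega
  | succ j ih =>
    rw [pow_succ, Module.End.mul_apply]
    have hl : lapX n (monomial α c) =
        ∑ i : Fin n, pderiv i.castSucc (pderiv i.castSucc (monomial α c)) := by
      simp [lapX, LinearMap.sum_apply]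
    rw [hl, map_sum]
    refine Finset.sum_eq_zero fun i _ => ?_
    rw [pderiv_monomial, pderiv_monomial]
    by_cases h2 : α i.castSucc ≤ 1
    · have hz : ((α - Finsupp.single i.castSucc 1 : Fin (n + 1) →₀ ℕ)) i.castSucc = 0 := by
        rw [Finsupp.tsub_apply, Finsupp.single_eq_same]; omega
      rw [hz]; simp
    · push_neg at h2
      have key : (α - Finsupp.single i.castSucc 1 - Finsupp.single i.castSucc 1)
          + Finsupp.single i.castSucc 2 = α := by
        ext a
        simp only [Finsupp.add_apply, Finsupp.tsub_apply, Finsupp.single_apply]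
        by_cases ha : i.castSucc = a
        · subst ha; simp; omega
        · simp [ha]
      have hsum : ((α - Finsupp.single i.castSucc 1 - Finsupp.single i.castSucc 1).sum
          fun _ e => e) + 2 = (α.sum fun _ e => e) := by
        conv_rhs => rw [← key]
        rw [Finsupp.sum_add_index' (fun _ => rfl) (fun _ _ _ => rfl),
          Finsupp.sum_single_index rfl]
      exact ih _ _ (by omega)

theorem deltaDInv_eq_sum (n : ℕ) (p : MvPolynomial (Fin (n + 1)) ℝ)
    (S : Finset (Fin (n + 1) →₀ ℕ)) (hS : p.support ⊆ S) :
    deltaDInv n p = ∑ σ ∈ S,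
      ∑ j ∈ Finset.range ((σ.sum fun _ e => e) + 1),
        (coeff σ p * ((-1 : ℝ) ^ j * ((σ (Fin.last n)).factorial : ℝ) /
            ((σ (Fin.last n) + 2 * j + 2).factorial : ℝ))) •
          (((lapX n) ^ j) (monomial (σ.erase (Fin.last n)) (1 : ℝ)) *
            (X (Fin.last n)) ^ (σ (Fin.last n) + 2 * j + 2)) := by
  refine Finset.sum_subset hS fun σ _ hσ => ?_
  rw [notMem_support_iff] at hσ
  simp [hσ]

theorem deltaDInv_add (n : ℕ) (p q : MvPolynomial (Fin (n + 1)) ℝ) :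
    deltaDInv n (p + q) = deltaDInv n p + deltaDInv n q := by
  rw [deltaDInv_eq_sum n (p + q) (p.support ∪ q.support) (MvPolynomial.support_add),
    deltaDInv_eq_sum n p (p.support ∪ q.support) (Finset.subset_union_left),
    deltaDInv_eq_sum n q (p.support ∪ q.support) (Finset.subset_union_right),
    ← Finset.sum_add_distrib]
  refine Finset.sum_congr rfl fun σ _ => ?_
  rw [← Finset.sum_add_distrib]
  refine Finset.sum_congr rfl fun j _ => ?_
  rw [coeff_add, add_mul, add_smul]

theorem deltaDInv_zero (n : ℕ) : deltaDInv n 0 = 0 := by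
  simp [deltaDInv]

theorem deltaDInv_sum {ι : Type*} (n : ℕ) (s : Finset ι)
    (g : ι → MvPolynomial (Fin (n + 1)) ℝ) :
    deltaDInv n (∑ i ∈ s, g i) = ∑ i ∈ s, deltaDInv n (g i) := by
  induction s using Finset.cons_induction with
  | empty => simp [deltaDInv_zero]
  | cons a s ha ih => rw [Finset.sum_cons, Finset.sum_cons, deltaDInv_add, ih]

theorem deltaDInv_monomial (n : ℕ) (σ : Fin (n + 1) →₀ ℕ) (c : ℝ) :
    deltaDInv n (monomial σ c) =
      ∑ j ∈ Finset.range ((σ.sum fun _ e => e) + 1),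
        (c * ((-1 : ℝ) ^ j * ((σ (Fin.last n)).factorial : ℝ) /
            ((σ (Fin.last n) + 2 * j + 2).factorial : ℝ))) •
          (((lapX n) ^ j) (monomial (σ.erase (Fin.last n)) (1 : ℝ)) *
            (X (Fin.last n)) ^ (σ (Fin.last n) + 2 * j + 2)) := by
  by_cases hc : c = 0
  · simp [hc, deltaDInv_zero]
  · rw [deltaDInv_eq_sum n _ {σ} (by rw [support_monomial, if_neg hc]),
      Finset.sum_singleton, coeff_monomial, if_pos rfl]

theorem setY0_monomial_of_last_eq_zero (n : ℕ) (σ : Fin (n + 1) →₀ ℕ) (c : ℝ)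
    (h : σ (Fin.last n) = 0) : setY0 n (monomial σ c) = monomial σ c := by
  rw [setY0, aeval_monomial, monomial_eq]
  congr 1
  rw [Finsupp.prod, Finsupp.prod]
  refine Finset.prod_congr rfl fun i hi => ?_
  have : i ≠ Fin.last n := by
    rintro rfl
    exact (Finsupp.mem_support_iff.mp hi) h
  rw [if_neg this]

theorem setY0_monomial_of_last_ne_zero (n : ℕ) (σ : Fin (n + 1) →₀ ℕ) (c : ℝ)
    (h : σ (Fin.last n) ≠ 0) : setY0 n (monomial σ c) = 0 := by
  rw [setY0, aeval_monomial, Finsupp.prod]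
  rw [Finset.prod_eq_zero (Finsupp.mem_support_iff.mpr h)
    (by rw [if_pos rfl]; exact zero_pow h)]
  rw [mul_zero]

theorem pderiv_last_lapX_pow_erase (n j : ℕ) (σ : Fin (n + 1) →₀ ℕ) :
    pderiv (Fin.last n) ((lapX n ^ j) (monomial (σ.erase (Fin.last n)) (1 : ℝ))) = 0 := by
  rw [pderiv_lapX_pow, pderiv_monomial, Finsupp.erase_same]
  simp

theorem erase_sum_add (n : ℕ) (σ : Fin (n + 1) →₀ ℕ) :
    ((σ.erase (Fin.last n)).sum fun _ e => e) + σ (Fin.last n) = σ.sum fun _ e => e := by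
  conv_rhs => rw [← Finsupp.single_add_erase (Fin.last n) σ]
  rw [Finsupp.sum_add_index' (fun _ => rfl) (fun _ _ _ => rfl),
    Finsupp.sum_single_index rfl, add_comm]

theorem coef_key (l j : ℕ) :
    ((-1 : ℝ) ^ j * ((l + 1).factorial : ℝ) / (((l + 1) + 2 * j + 2).factorial : ℝ))
        * (((l + 1) + 2 * j + 2 : ℕ) : ℝ)
      = ((l + 1 : ℕ) : ℝ) * ((-1 : ℝ) ^ j * (l.factorial : ℝ) / ((l + 2 * j + 2).factorial : ℝ)) := by
  have h1 : (l + 1) + 2 * j + 2 = (l + 2 * j + 2) + 1 := by omega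
  rw [h1, Nat.factorial_succ, Nat.factorial_succ]
  have h2 : ((l + 2 * j + 2).factorial : ℝ) ≠ 0 := Nat.cast_ne_zero.mpr (Nat.factorial_ne_zero _)
  push_cast
  field_simp

theorem smul_mul_natCast (a : ℝ) (k : ℕ) (L P : MvPolynomial (Fin (n + 1)) ℝ) :
    a • (L * ((k : MvPolynomial (Fin (n + 1)) ℝ) * P)) = (a * (k : ℝ)) • (L * P) := by
  rw [smul_eq_C_mul, smul_eq_C_mul, map_mul, C_eq_coe_nat]
  ring

theorem key_s3 (n : ℕ) (σ : Fin (n + 1) →₀ ℕ) (c : ℝ) :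
    pderiv (R := ℝ) (Fin.last n) (deltaDInv n (monomial σ c))
      = deltaDInv n (pderiv (R := ℝ) (Fin.last n) (monomial σ c))
        + pderiv (R := ℝ) (Fin.last n) (deltaDInv n (setY0 n (monomial σ c))) := by
  rcases h : σ (Fin.last n) with _ | l
  · rw [setY0_monomial_of_last_eq_zero n σ c h, pderiv_monomial, h]
    norm_num [deltaDInv_zero]
  · rw [setY0_monomial_of_last_ne_zero n σ c (by rw [h]; exact Nat.succ_ne_zero l),
      deltaDInv_zero, map_zero, add_zero, pderiv_monomial]
    set τ := σ - Finsupp.single (Fin.last n) 1 with hτ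
    have hτl : τ (Fin.last n) = l := by
      rw [hτ, Finsupp.tsub_apply, Finsupp.single_eq_same, h]
      omega
    have hτe : τ.erase (Fin.last n) = σ.erase (Fin.last n) := by
      ext a
      by_cases ha : a = Fin.last n
      · subst ha; rw [Finsupp.erase_same, Finsupp.erase_same]
      · rw [Finsupp.erase_ne ha, Finsupp.erase_ne ha, hτ, Finsupp.tsub_apply,
          Finsupp.single_eq_of_ne' (fun hc => ha hc.symm), Nat.sub_zero]
    have hτσ : τ + Finsupp.single (Fin.last n) 1 = σ := by
      ext a
      by_cases ha : a = Fin.last n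
      · subst ha
        rw [Finsupp.add_apply, hτl, Finsupp.single_eq_same, h]
      · rw [Finsupp.add_apply, Finsupp.single_eq_of_ne' (fun hc => ha hc.symm), add_zero,
          hτ, Finsupp.tsub_apply, Finsupp.single_eq_of_ne' (fun hc => ha hc.symm), Nat.sub_zero]
    have hτs : (τ.sum fun _ e => e) + 1 = σ.sum fun _ e => e := by
      conv_rhs => rw [← hτσ]
      rw [Finsupp.sum_add_index' (fun _ => rfl) (fun _ _ _ => rfl),
        Finsupp.sum_single_index rfl]
    rw [deltaDInv_monomial, deltaDInv_monomial, map_sum]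
    have hterm : ∀ j : ℕ,
        pderiv (R := ℝ) (Fin.last n)
          ((c * ((-1 : ℝ) ^ j * ((σ (Fin.last n)).factorial : ℝ) /
              ((σ (Fin.last n) + 2 * j + 2).factorial : ℝ))) •
            (((lapX n) ^ j) (monomial (σ.erase (Fin.last n)) (1 : ℝ)) *
              (X (Fin.last n)) ^ (σ (Fin.last n) + 2 * j + 2)))
        = (c * ((-1 : ℝ) ^ j * ((σ (Fin.last n)).factorial : ℝ) /
              ((σ (Fin.last n) + 2 * j + 2).factorial : ℝ)) *
              ((σ (Fin.last n) + 2 * j + 2 : ℕ) : ℝ)) •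
            (((lapX n) ^ j) (monomial (σ.erase (Fin.last n)) (1 : ℝ)) *
              (X (Fin.last n)) ^ (σ (Fin.last n) + 2 * j + 1)) := by
      intro j
      rw [Derivation.map_smul, pderiv_mul, pderiv_last_lapX_pow_erase, zero_mul, zero_add, pderiv_pow,
        pderiv_X_self, mul_one]
      have he : σ (Fin.last n) + 2 * j + 2 - 1 = σ (Fin.last n) + 2 * j + 1 := by omega
      rw [he, smul_mul_natCast]
    simp only [hterm]
    rw [← hτs, Finset.sum_range_succ]
    have htop : ((lapX n) ^ ((τ.sum fun _ e => e) + 1))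
        (monomial (σ.erase (Fin.last n)) (1 : ℝ)) = 0 := by
      apply lapX_pow_monomial_eq_zero
      have := erase_sum_add n σ
      omega
    rw [htop, zero_mul, smul_zero, add_zero]
    refine Finset.sum_congr rfl fun j _ => ?_
    rw [hτl, hτe, h]
    have he : l + 1 + 2 * j + 1 = l + 2 * j + 2 := by omega
    rw [he]
    congr 1
    rw [mul_assoc, coef_key l j]
    ring

/-- for `f ∈ 𝒫̇_m(ℝ^d)` (`d ≥ 2`, `m ≥ 1`), with `f₀(x,y) := f(x,0)`,
one has `∂_y (Δ_D^{-1} f) = Δ_D^{-1} (∂_y f) + ∂_y (Δ_D^{-1} f₀)`. -/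
theorem stmt3 (n m : ℕ) (hn : 1 ≤ n) (hm : 1 ≤ m)
    (f : MvPolynomial (Fin (n + 1)) ℝ) (hf : f.IsHomogeneous m) :
    pderiv (R := ℝ) (Fin.last n) (deltaDInv n f)
      = deltaDInv n (pderiv (R := ℝ) (Fin.last n) f)
        + pderiv (R := ℝ) (Fin.last n) (deltaDInv n (setY0 n f)) := by
  conv_lhs => rw [f.as_sum]
  conv_rhs => rw [f.as_sum]
  simp only [deltaDInv_sum, map_sum]
  rw [← Finset.sum_add_distrib]
  exact Finset.sum_congr rfl fun σ _ => key_s3 n σ _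
end
end

section
/- Let d ≥ 2, m ≥ 2, and p ∈ 𝒜̇_{m-1}(ℝ^d). Set U = Δ_D^{-1}∇p ∈ 𝒫̇_m(ℝ^d)^d (Δ_D^{-1} applied to each component of ∇p). Then the pair (U,p) satisfies: −ΔU + ∇p = 0 on ℝ^d; ∇·U = ∂_y Δ_D^{-1}(p_y⁰) on ℝ^d, where p_y⁰ ∈ 𝒫̇_{m-2}(ℝ^d) denotes the polynomial (x,y) ↦ (∂_y p)(x,0); and U(x,0) = 0 for all x ∈ ℝ^{d-1}. -/
open MvPolynomial

noncomputable section

lemma pderiv_pderiv_comm {N : ℕ} (i j : Fin N) (p : MvPolynomial (Fin N) ℝ) :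
    pderiv (R := ℝ) i (pderiv (R := ℝ) j p) = pderiv (R := ℝ) j (pderiv (R := ℝ) i p) := by
  induction p using MvPolynomial.induction_on' with
  | add p q hp hq => simp [map_add, hp, hq]
  | monomial s a =>
    rcases eq_or_ne i j with rfl | hij
    · rfl
    · simp only [pderiv_monomial]
      rw [tsub_tsub, tsub_tsub, add_comm (Finsupp.single j 1)]
      congr 1
      rw [Finsupp.tsub_apply, Finsupp.tsub_apply, Finsupp.single_eq_of_ne' hij,
        Finsupp.single_eq_of_ne' (Ne.symm hij)]
      push_cast [Nat.sub_zero]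
      ring

lemma pderiv_lapX_comm {n : ℕ} (k : Fin (n + 1)) (p : MvPolynomial (Fin (n + 1)) ℝ) :
    pderiv (R := ℝ) k (lapX n p) = lapX n (pderiv (R := ℝ) k p) := by
  simp only [lapX, LinearMap.sum_apply, LinearMap.comp_apply, Derivation.coeFn_coe, map_sum]
  refine Finset.sum_congr rfl fun i _ => ?_
  rw [pderiv_pderiv_comm k, pderiv_pderiv_comm k]

lemma pderiv_lapX_pow_comm {n : ℕ} (k : Fin (n + 1)) (j : ℕ) (p : MvPolynomial (Fin (n + 1)) ℝ) :
    pderiv (R := ℝ) k ((lapX n ^ j) p) = (lapX n ^ j) (pderiv (R := ℝ) k p) := by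
  induction j with
  | zero => simp
  | succ j ih =>
    rw [pow_succ', Module.End.mul_apply, Module.End.mul_apply, pderiv_lapX_comm, ih]

-- Finsupp degree helpers
lemma deg_add {σ : Type*} (a b : σ →₀ ℕ) : (a + b).degree = a.degree + b.degree := by
  simp [Finsupp.degree_eq_weight_one, map_add]

lemma deg_single {σ : Type*} (i : σ) (k : ℕ) : (Finsupp.single i k).degree = k := by
  simp [Finsupp.degree_eq_weight_one, Finsupp.weight_apply, Finsupp.sum_single_index]

lemma deg_mono {σ : Type*} {a b : σ →₀ ℕ} (h : a ≤ b) : a.degree ≤ b.degree := by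
  have : b = a + (b - a) := by rw [add_tsub_cancel_of_le h]
  rw [this, deg_add]; omega

lemma deg_support {σ : Type} {p : MvPolynomial σ ℝ} {n : ℕ} (h : p.IsHomogeneous n)
    {d : σ →₀ ℕ} (hd : d ∈ p.support) : d.degree = n := by
  have := h (MvPolynomial.mem_support_iff.1 hd)
  rw [Finsupp.degree_eq_weight_one]; exact this

lemma pderiv_isHomogeneous {N : ℕ} (i : Fin N) {p : MvPolynomial (Fin N) ℝ} {k : ℕ}
    (hp : p.IsHomogeneous k) : (pderiv (R := ℝ) i p).IsHomogeneous (k - 1) := by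
  rw [p.as_sum, map_sum]
  apply MvPolynomial.IsHomogeneous.sum
  intro d hd
  rw [pderiv_monomial]
  rcases Nat.eq_zero_or_pos (d i) with h0 | hpos
  · rw [h0]; simp only [Nat.cast_zero, mul_zero, map_zero]
    exact MvPolynomial.isHomogeneous_zero _ _ _
  · apply isHomogeneous_monomial
    have hdd : d.degree = k := deg_support hp hd
    have hle : Finsupp.single i 1 ≤ d := by
      rw [Finsupp.single_le_iff]; omega
    have : d = (d - Finsupp.single i 1) + Finsupp.single i 1 := by
      rw [tsub_add_cancel_of_le hle]
    rw [this, deg_add, deg_single] at hdd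
    omega

lemma lapX_isHomogeneous {n : ℕ} {p : MvPolynomial (Fin (n + 1)) ℝ} {k : ℕ}
    (hp : p.IsHomogeneous k) : ((lapX n) p).IsHomogeneous (k - 2) := by
  rw [lapX, LinearMap.sum_apply]
  apply MvPolynomial.IsHomogeneous.sum
  intro i _
  have := pderiv_isHomogeneous i.castSucc (pderiv_isHomogeneous i.castSucc hp)
  simpa [Nat.sub_sub] using this

lemma isHomogeneous_pderiv_eq_zero {N : ℕ} (i : Fin N) {p : MvPolynomial (Fin N) ℝ}
    (hp : p.IsHomogeneous 0) : pderiv (R := ℝ) i p = 0 := by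
  rw [p.as_sum, map_sum]
  apply Finset.sum_eq_zero
  intro d hd
  have hdd : d.degree = 0 := deg_support hp hd
  have : d i = 0 := by have := Finsupp.le_degree i d; omega
  rw [pderiv_monomial, this]
  simp

lemma lapX_eq_zero_of_low {n : ℕ} {p : MvPolynomial (Fin (n + 1)) ℝ} {k : ℕ}
    (hp : p.IsHomogeneous k) (hk : k < 2) : lapX n p = 0 := by
  rw [lapX, LinearMap.sum_apply]
  apply Finset.sum_eq_zero
  intro i _
  show pderiv (R := ℝ) i.castSucc (pderiv (R := ℝ) i.castSucc p) = 0
  interval_cases k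
  · rw [isHomogeneous_pderiv_eq_zero _ hp, map_zero]
  · exact isHomogeneous_pderiv_eq_zero _ (by simpa using pderiv_isHomogeneous i.castSucc hp)

lemma lapX_pow_eq_zero {n : ℕ} (j : ℕ) {p : MvPolynomial (Fin (n + 1)) ℝ} {k : ℕ}
    (hp : p.IsHomogeneous k) (hk : k < 2 * j) : (lapX n ^ j) p = 0 := by
  induction j generalizing p k with
  | zero => omega
  | succ j ih =>
    rw [pow_succ, Module.End.mul_apply]
    rcases Nat.lt_or_ge k 2 with h2 | h2
    · rcases Nat.eq_zero_or_pos j with rfl | hj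
      · simpa using lapX_eq_zero_of_low hp h2
      · rw [ih (lapX_isHomogeneous hp) (by omega)]
    · rw [ih (lapX_isHomogeneous hp) (by omega)]

def ck (l j : ℕ) : ℝ := (-1 : ℝ) ^ j * (l.factorial : ℝ) / ((l + 2 * j + 2).factorial : ℝ)

def gt (n : ℕ) (τ : Fin (n + 1) →₀ ℕ) (l j : ℕ) : MvPolynomial (Fin (n + 1)) ℝ :=
  ((lapX n) ^ j) (monomial τ (1 : ℝ)) * (X (Fin.last n)) ^ (l + 2 * j + 2)

def gg (n : ℕ) (τ : Fin (n + 1) →₀ ℕ) (l N : ℕ) : MvPolynomial (Fin (n + 1)) ℝ :=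
  ∑ j ∈ Finset.range N, ck l j • gt n τ l j

def FF (n : ℕ) (σ : Fin (n + 1) →₀ ℕ) : MvPolynomial (Fin (n + 1)) ℝ :=
  gg n (σ.erase (Fin.last n)) (σ (Fin.last n)) (σ.degree + 1)

def dlin (n : ℕ) : MvPolynomial (Fin (n + 1)) ℝ →ₗ[ℝ] MvPolynomial (Fin (n + 1)) ℝ :=
  (Finsupp.lsum ℝ fun σ => LinearMap.toSpanSingleton ℝ _ (FF n σ)) ∘ₗ
    (AddMonoidAlgebra.coeffLinearEquiv ℝ).toLinearMap

lemma dlin_apply (n : ℕ) (p : MvPolynomial (Fin (n + 1)) ℝ) :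
    dlin n p = ∑ σ ∈ p.support, coeff σ p • FF n σ := rfl

lemma dlin_monomial (n : ℕ) (σ : Fin (n + 1) →₀ ℕ) (r : ℝ) :
    dlin n (monomial σ r) = r • FF n σ := by
  show ((Finsupp.lsum ℝ fun σ => LinearMap.toSpanSingleton ℝ _ (FF n σ)) : _ →ₗ[ℝ] _)
      (AddMonoidAlgebra.coeffLinearEquiv ℝ (monomial σ r)) = r • FF n σ
  change _ = r • FF n σ
  rw [show AddMonoidAlgebra.coeffLinearEquiv ℝ (monomial σ r) = Finsupp.single σ r from rfl]
  rw [Finsupp.lsum_single]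
  rfl

lemma deltaDInv_eq (n : ℕ) (p : MvPolynomial (Fin (n + 1)) ℝ) :
    deltaDInv n p = dlin n p := by
  rw [dlin_apply, deltaDInv]
  refine Finset.sum_congr rfl fun σ _ => ?_
  rw [FF, gg, Finset.smul_sum]
  have hdeg : (σ.sum fun _ e => e) = σ.degree := rfl
  rw [hdeg]
  refine Finset.sum_congr rfl fun j _ => ?_
  rw [ck, gt, smul_smul]

-- stability of gg
lemma gt_eq_zero {n : ℕ} {τ : Fin (n + 1) →₀ ℕ} {l j : ℕ} (h : τ.degree < 2 * j) :
    gt n τ l j = 0 := by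
  rw [gt, lapX_pow_eq_zero j (isHomogeneous_monomial 1 rfl) h, zero_mul]

lemma gg_stab {n : ℕ} {τ : Fin (n + 1) →₀ ℕ} {l N N' : ℕ}
    (h : τ.degree ≤ N) (h1 : 1 ≤ N) (h' : τ.degree ≤ N') (h1' : 1 ≤ N') :
    gg n τ l N = gg n τ l N' := by
  have key : ∀ {A B : ℕ}, A ≤ B → τ.degree ≤ A → 1 ≤ A → gg n τ l B = gg n τ l A := by
    intro A B hAB hA h1A
    rw [gg, gg]
    refine (Finset.sum_subset (Finset.range_subset_range.2 hAB) ?_).symm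
    intro j _ hj
    rw [Finset.mem_range, not_lt] at hj
    rw [gt_eq_zero (by omega), smul_zero]
  rcases le_total N N' with hNN | hNN
  · exact (key hNN h h1).symm
  · exact key hNN h' h1'

-- derivative structural lemmas
lemma pderiv_cs_X_last_pow {n : ℕ} (i : Fin n) (e : ℕ) :
    pderiv (R := ℝ) i.castSucc ((X (Fin.last n) : MvPolynomial (Fin (n + 1)) ℝ) ^ e) = 0 := by
  rw [pderiv_pow, pderiv_X_of_ne (by simp [Fin.ext_iff]; omega), mul_zero]

lemma pderiv_cs_mul_pow {n : ℕ} (i : Fin n) (f : MvPolynomial (Fin (n + 1)) ℝ) (e : ℕ) :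
    pderiv (R := ℝ) i.castSucc (f * X (Fin.last n) ^ e)
      = pderiv (R := ℝ) i.castSucc f * X (Fin.last n) ^ e := by
  rw [pderiv_mul, pderiv_cs_X_last_pow, mul_zero, add_zero]

lemma lapX_mul_pow {n : ℕ} (f : MvPolynomial (Fin (n + 1)) ℝ) (e : ℕ) :
    lapX n (f * X (Fin.last n) ^ e) = lapX n f * X (Fin.last n) ^ e := by
  simp only [lapX, LinearMap.sum_apply, LinearMap.comp_apply, Derivation.coeFn_coe,
    Finset.sum_mul]
  refine Finset.sum_congr rfl fun i _ => ?_
  rw [pderiv_cs_mul_pow, pderiv_cs_mul_pow]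

lemma pderiv_last_base {n : ℕ} (j : ℕ) {τ : Fin (n + 1) →₀ ℕ} (hτ : τ (Fin.last n) = 0) :
    pderiv (R := ℝ) (Fin.last n) ((lapX n ^ j) (monomial τ (1 : ℝ))) = 0 := by
  rw [pderiv_lapX_pow_comm, pderiv_monomial, hτ]
  simp

lemma pderiv_last_pow {n : ℕ} (e : ℕ) :
    pderiv (R := ℝ) (Fin.last n) ((X (Fin.last n) : MvPolynomial (Fin (n + 1)) ℝ) ^ e)
      = (e : ℝ) • X (Fin.last n) ^ (e - 1) := by
  rw [pderiv_pow, pderiv_X_self, mul_one, smul_eq_C_mul]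
  congr 1

lemma pderiv_last_mul_pow {n : ℕ} {f : MvPolynomial (Fin (n + 1)) ℝ} (hf :
    pderiv (R := ℝ) (Fin.last n) f = 0) (e : ℕ) :
    pderiv (R := ℝ) (Fin.last n) (f * X (Fin.last n) ^ e)
      = (e : ℝ) • (f * X (Fin.last n) ^ (e - 1)) := by
  rw [pderiv_mul, hf, zero_mul, zero_add, pderiv_last_pow, mul_smul_comm]

-- coefficient identities
lemma fact_cast_ne_zero (k : ℕ) : ((k.factorial : ℝ)) ≠ 0 := by
  exact_mod_cast k.factorial_pos.ne'

lemma ck_zero (l : ℕ) : ck l 0 * (((l + 2 * 0 + 2 : ℕ) : ℝ) * ((l + 2 * 0 + 1 : ℕ) : ℝ)) = 1 := by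
  simp only [ck, pow_zero, one_mul, Nat.mul_zero, Nat.add_zero, mul_zero, add_zero]
  have h2 : (l + 2).factorial = (l + 2) * ((l + 1) * l.factorial) := by
    rw [show l + 2 = (l + 1) + 1 by ring, Nat.factorial_succ, Nat.factorial_succ]
  rw [h2]
  field_simp
  push_cast
  ring

lemma ck_succ (l j : ℕ) :
    ck l (j + 1) * (((l + 2 * (j + 1) + 2 : ℕ) : ℝ) * ((l + 2 * (j + 1) + 1 : ℕ) : ℝ))
      = -(ck l j) := by
  simp only [ck]
  have h2 : (l + 2 * (j + 1) + 2).factorial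
      = (l + 2 * (j + 1) + 2) * ((l + 2 * (j + 1) + 1) * (l + 2 * j + 2).factorial) := by
    rw [show l + 2 * (j + 1) + 2 = (l + 2 * (j + 1) + 1) + 1 by ring, Nat.factorial_succ,
      show l + 2 * (j + 1) + 1 = (l + 2 * j + 2) + 1 by ring, Nat.factorial_succ]
  rw [h2, pow_succ]
  have := fact_cast_ne_zero (l + 2 * j + 2)
  field_simp
  push_cast
  ring

-- Finsupp helpers
lemma erase_le {α : Type*} (a : α) (σ : α →₀ ℕ) : σ.erase a ≤ σ := by
  intro i
  classical
  rw [Finsupp.erase_apply]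
  split <;> omega

lemma erase_add_single_eq {n : ℕ} (σ : Fin (n + 1) →₀ ℕ) :
    σ.erase (Fin.last n) + Finsupp.single (Fin.last n) (σ (Fin.last n)) = σ :=
  Finsupp.erase_add_single _ _

lemma monomial_erase_mul_pow {n : ℕ} (σ : Fin (n + 1) →₀ ℕ) :
    (monomial (σ.erase (Fin.last n)) (1 : ℝ) : MvPolynomial (Fin (n + 1)) ℝ)
        * X (Fin.last n) ^ (σ (Fin.last n)) = monomial σ 1 := by
  rw [X_pow_eq_monomial, monomial_mul, one_mul, erase_add_single_eq]

def AA (n : ℕ) (τ : Fin (n + 1) →₀ ℕ) (j : ℕ) : MvPolynomial (Fin (n + 1)) ℝ :=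
  (lapX n ^ j) (monomial τ (1 : ℝ))

lemma AA_succ (n : ℕ) (τ : Fin (n + 1) →₀ ℕ) (j : ℕ) : lapX n (AA n τ j) = AA n τ (j + 1) := by
  rw [AA, AA, pow_succ', Module.End.mul_apply]

lemma AA_last (n : ℕ) {τ : Fin (n + 1) →₀ ℕ} (hτ : τ (Fin.last n) = 0) (j : ℕ) :
    pderiv (R := ℝ) (Fin.last n) (AA n τ j) = 0 :=
  pderiv_last_base j hτ

lemma AA_zero (n : ℕ) (τ : Fin (n + 1) →₀ ℕ) : AA n τ 0 = monomial τ 1 := by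
  rw [AA, pow_zero, Module.End.one_apply]

lemma AA_vanish (n : ℕ) {τ : Fin (n + 1) →₀ ℕ} {j : ℕ} (h : τ.degree < 2 * j) :
    AA n τ j = 0 :=
  lapX_pow_eq_zero j (isHomogeneous_monomial 1 rfl) h

def aa (n : ℕ) (τ : Fin (n + 1) →₀ ℕ) (l j : ℕ) : MvPolynomial (Fin (n + 1)) ℝ :=
  ck l j • (AA n τ (j + 1) * X (Fin.last n) ^ (l + 2 * j + 2))

def bb (n : ℕ) (τ : Fin (n + 1) →₀ ℕ) (l j : ℕ) : MvPolynomial (Fin (n + 1)) ℝ :=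
  (ck l j * (((l + 2 * j + 2 : ℕ) : ℝ) * ((l + 2 * j + 1 : ℕ) : ℝ))) •
    (AA n τ j * X (Fin.last n) ^ (l + 2 * j))

lemma lapFull_gt {n : ℕ} {τ : Fin (n + 1) →₀ ℕ} (hτ : τ (Fin.last n) = 0) (l j : ℕ) :
    lapFull n (ck l j • gt n τ l j) = aa n τ l j + bb n τ l j := by
  rw [lapFull, LinearMap.add_apply, LinearMap.comp_apply, Derivation.coeFn_coe]
  congr 1
  · rw [map_smul, aa, gt, ← AA, lapX_mul_pow, AA_succ]
  · rw [gt, ← AA, Derivation.map_smul, pderiv_last_mul_pow (AA_last n hτ j),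
      Derivation.map_smul, Derivation.map_smul, pderiv_last_mul_pow (AA_last n hτ j), bb,
      smul_smul, smul_smul]
    have e1 : l + 2 * j + 2 - 1 = l + 2 * j + 1 := by omega
    have e2 : l + 2 * j + 1 - 1 = l + 2 * j := by omega
    rw [e1, e2, mul_assoc]

lemma bb_zero {n : ℕ} (σ : Fin (n + 1) →₀ ℕ) :
    bb n (σ.erase (Fin.last n)) (σ (Fin.last n)) 0 = monomial σ 1 := by
  rw [bb, ck_zero, AA_zero, one_smul]
  have : σ (Fin.last n) + 2 * 0 = σ (Fin.last n) := by omega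
  rw [this, monomial_erase_mul_pow]

lemma bb_succ {n : ℕ} (τ : Fin (n + 1) →₀ ℕ) (l j : ℕ) :
    bb n τ l (j + 1) = -(aa n τ l j) := by
  rw [bb, aa, ck_succ, neg_smul]
  congr 2

lemma lapFull_FF {n : ℕ} (σ : Fin (n + 1) →₀ ℕ) :
    lapFull n (FF n σ) = monomial σ (1 : ℝ) := by
  have hτ0 : (σ.erase (Fin.last n)) (Fin.last n) = 0 := Finsupp.erase_same
  have hτdeg : (σ.erase (Fin.last n)).degree ≤ σ.degree := deg_mono (erase_le _ _)
  rw [FF, gg, map_sum]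
  have key : ∀ j ∈ Finset.range (σ.degree + 1),
      lapFull n (ck (σ (Fin.last n)) j • gt n (σ.erase (Fin.last n)) (σ (Fin.last n)) j)
        = aa n (σ.erase (Fin.last n)) (σ (Fin.last n)) j
          + bb n (σ.erase (Fin.last n)) (σ (Fin.last n)) j :=
    fun j _ => lapFull_gt hτ0 _ j
  rw [Finset.sum_congr rfl key, Finset.sum_add_distrib]
  rw [Finset.sum_range_succ (fun j => aa n _ _ j), Finset.sum_range_succ']
  have haD : aa n (σ.erase (Fin.last n)) (σ (Fin.last n)) σ.degree = 0 := by
    rw [aa, AA_vanish n (by omega), zero_mul, smul_zero]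
  rw [haD, add_zero, bb_zero]
  have : ∀ j, bb n (σ.erase (Fin.last n)) (σ (Fin.last n)) (j + 1)
      = -(aa n (σ.erase (Fin.last n)) (σ (Fin.last n)) j) := fun j => bb_succ _ _ j
  simp only [this]
  rw [Finset.sum_neg_distrib]
  abel

lemma lapFull_dlin {n : ℕ} (q : MvPolynomial (Fin (n + 1)) ℝ) :
    lapFull n (dlin n q) = q := by
  induction q using MvPolynomial.induction_on' with
  | add p q hp hq => rw [map_add, map_add, hp, hq]
  | monomial s a =>
    rw [dlin_monomial, map_smul, lapFull_FF, ← map_smul, smul_eq_mul, mul_one]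

lemma eval_snoc_deltaDInv {n : ℕ} (x : Fin n → ℝ) (q : MvPolynomial (Fin (n + 1)) ℝ) :
    eval (Fin.snoc x 0) (deltaDInv n q) = 0 := by
  rw [deltaDInv, map_sum]
  refine Finset.sum_eq_zero fun σ _ => ?_
  rw [map_sum]
  refine Finset.sum_eq_zero fun j _ => ?_
  rw [smul_eq_C_mul, eval_mul, eval_mul, eval_pow, eval_X]
  rw [show (Fin.snoc x 0 : Fin (n+1) → ℝ) (Fin.last n) = 0 from Fin.snoc_last _ _,
    zero_pow (by omega), mul_zero, mul_zero]

-- more Finsupp helpers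
lemma cs_ne_last {n : ℕ} (i : Fin n) : i.castSucc ≠ Fin.last n :=
  (Fin.castSucc_lt_last i).ne

lemma erase_sub_cs {n : ℕ} (σ : Fin (n + 1) →₀ ℕ) (i : Fin n) :
    (σ - Finsupp.single i.castSucc 1).erase (Fin.last n)
      = σ.erase (Fin.last n) - Finsupp.single i.castSucc 1 := by
  ext a
  rcases eq_or_ne a (Fin.last n) with rfl | ha
  · rw [Finsupp.erase_same, Finsupp.tsub_apply, Finsupp.erase_same,
      Finsupp.single_eq_of_ne' (cs_ne_last i)]
    omega
  · rw [Finsupp.erase_ne ha, Finsupp.tsub_apply, Finsupp.tsub_apply, Finsupp.erase_ne ha]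

lemma apply_last_sub_cs {n : ℕ} (σ : Fin (n + 1) →₀ ℕ) (i : Fin n) :
    (σ - Finsupp.single i.castSucc 1 : Fin (n + 1) →₀ ℕ) (Fin.last n) = σ (Fin.last n) := by
  rw [Finsupp.tsub_apply, Finsupp.single_eq_of_ne' (cs_ne_last i)]
  omega

lemma erase_sub_last {n : ℕ} (σ : Fin (n + 1) →₀ ℕ) :
    (σ - Finsupp.single (Fin.last n) 1).erase (Fin.last n) = σ.erase (Fin.last n) := by
  ext a
  rcases eq_or_ne a (Fin.last n) with rfl | ha
  · rw [Finsupp.erase_same, Finsupp.erase_same]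
  · rw [Finsupp.erase_ne ha, Finsupp.erase_ne ha, Finsupp.tsub_apply,
      Finsupp.single_eq_of_ne' (Ne.symm ha)]
    omega

lemma apply_last_sub_last {n : ℕ} (σ : Fin (n + 1) →₀ ℕ) :
    (σ - Finsupp.single (Fin.last n) 1 : Fin (n + 1) →₀ ℕ) (Fin.last n)
      = σ (Fin.last n) - 1 := by
  rw [Finsupp.tsub_apply, Finsupp.single_eq_same]

-- commutation C1
lemma pderiv_cs_gg {n : ℕ} (i : Fin n) (τ : Fin (n + 1) →₀ ℕ) (l N : ℕ) :
    pderiv (R := ℝ) i.castSucc (gg n τ l N)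
      = ((τ i.castSucc : ℕ) : ℝ) • gg n (τ - Finsupp.single i.castSucc 1) l N := by
  rw [gg, map_sum, gg, Finset.smul_sum]
  refine Finset.sum_congr rfl fun j _ => ?_
  rw [gt, ← AA, Derivation.map_smul, pderiv_cs_mul_pow, AA, pderiv_lapX_pow_comm,
    pderiv_monomial, one_mul]
  rw [show (monomial (τ - Finsupp.single i.castSucc 1) ((τ i.castSucc : ℝ)) :
        MvPolynomial (Fin (n + 1)) ℝ)
      = ((τ i.castSucc : ℕ) : ℝ) • monomial (τ - Finsupp.single i.castSucc 1) (1 : ℝ) by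
    rw [smul_monomial, smul_eq_mul, mul_one]]
  rw [map_smul, gt, ← AA, smul_mul_assoc, smul_comm]

lemma pderiv_cs_dlin {n : ℕ} (i : Fin n) (q : MvPolynomial (Fin (n + 1)) ℝ) :
    pderiv (R := ℝ) i.castSucc (dlin n q) = dlin n (pderiv (R := ℝ) i.castSucc q) := by
  induction q using MvPolynomial.induction_on' with
  | add p q hp hq => simp [map_add, hp, hq]
  | monomial σ r =>
    rw [dlin_monomial, pderiv_monomial, dlin_monomial, Derivation.map_smul, FF, FF,
      pderiv_cs_gg, erase_sub_cs, apply_last_sub_cs]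
    have hτc : (σ.erase (Fin.last n)) i.castSucc = σ i.castSucc :=
      Finsupp.erase_ne (cs_ne_last i)
    rw [hτc, smul_smul]
    have hstab : gg n (σ.erase (Fin.last n) - Finsupp.single i.castSucc 1) (σ (Fin.last n))
          (σ.degree + 1)
        = gg n (σ.erase (Fin.last n) - Finsupp.single i.castSucc 1) (σ (Fin.last n))
          ((σ - Finsupp.single i.castSucc 1).degree + 1) := by
      apply gg_stab
      · have h1 : σ.erase (Fin.last n) - Finsupp.single i.castSucc 1 ≤ σ :=
          le_trans tsub_le_self (erase_le _ _)
        have := deg_mono h1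
        omega
      · omega
      · have h1 : σ.erase (Fin.last n) - Finsupp.single i.castSucc 1
            ≤ σ - Finsupp.single i.castSucc 1 := by
          rw [← erase_sub_cs]
          exact erase_le _ _
        have := deg_mono h1
        omega
      · omega
    rw [hstab]

-- coefficient identity for C2
lemma ck_shift (k j : ℕ) :
    ck (k + 1) j * (((k + 1 + 2 * j + 2 : ℕ) : ℝ)) = ((k + 1 : ℕ) : ℝ) * ck k j := by
  simp only [ck]
  have h1 : (k + 1 + 2 * j + 2).factorial = (k + 1 + 2 * j + 2) * (k + 2 * j + 2).factorial := by
    rw [show k + 1 + 2 * j + 2 = (k + 2 * j + 2) + 1 by ring, Nat.factorial_succ]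
  have h2 : (k + 1).factorial = (k + 1) * k.factorial := Nat.factorial_succ k
  rw [h1, h2]
  have := fact_cast_ne_zero (k + 2 * j + 2)
  have : ((k + 1 + 2 * j + 2 : ℕ) : ℝ) ≠ 0 := by positivity
  field_simp
  push_cast
  ring

lemma pderiv_last_gg {n : ℕ} {τ : Fin (n + 1) →₀ ℕ} (hτ : τ (Fin.last n) = 0) (k N : ℕ) :
    pderiv (R := ℝ) (Fin.last n) (gg n τ (k + 1) N)
      = ((k + 1 : ℕ) : ℝ) • gg n τ k N := by
  rw [gg, map_sum, gg, Finset.smul_sum]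
  refine Finset.sum_congr rfl fun j _ => ?_
  rw [gt, ← AA, Derivation.map_smul, pderiv_last_mul_pow (AA_last n hτ j)]
  rw [show k + 1 + 2 * j + 2 - 1 = k + 2 * j + 2 by omega]
  rw [smul_smul, gt, ← AA, smul_smul]
  congr 1
  have := ck_shift k j
  push_cast at this ⊢
  linarith [this]

lemma setY0_monomial_zero {n : ℕ} {σ : Fin (n + 1) →₀ ℕ} (h : σ (Fin.last n) = 0) (r : ℝ) :
    setY0 n (monomial σ r) = monomial σ r := by
  rw [setY0, aeval_monomial, monomial_eq]
  congr 1
  refine Finsupp.prod_congr fun i hi => ?_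
  have : i ≠ Fin.last n := by
    rintro rfl
    exact (Finsupp.mem_support_iff.1 hi) h
  rw [if_neg this]

lemma setY0_monomial_pos {n : ℕ} {σ : Fin (n + 1) →₀ ℕ} (h : σ (Fin.last n) ≠ 0) (r : ℝ) :
    setY0 n (monomial σ r) = 0 := by
  rw [setY0, aeval_monomial]
  have : (σ.prod fun i e => (if i = Fin.last n then 0 else X i : MvPolynomial (Fin (n + 1)) ℝ) ^ e)
      = 0 := by
    apply Finset.prod_eq_zero (Finsupp.mem_support_iff.2 h)
    simp only [if_pos rfl]
    exact zero_pow h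
  rw [this, mul_zero]

lemma pderiv_last_dlin {n : ℕ} (q : MvPolynomial (Fin (n + 1)) ℝ) :
    pderiv (R := ℝ) (Fin.last n) (dlin n q)
      = dlin n (pderiv (R := ℝ) (Fin.last n) q)
        + pderiv (R := ℝ) (Fin.last n) (dlin n (setY0 n q)) := by
  induction q using MvPolynomial.induction_on' with
  | add p q hp hq => simp [map_add, hp, hq]; abel
  | monomial σ r =>
    rcases Nat.eq_zero_or_pos (σ (Fin.last n)) with h0 | hpos
    · rw [setY0_monomial_zero h0, pderiv_monomial, h0]
      push_cast
      rw [mul_zero, monomial_zero, map_zero, zero_add]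
    · rw [setY0_monomial_pos (by omega), map_zero, map_zero, add_zero]
      obtain ⟨k, hk⟩ : ∃ k, σ (Fin.last n) = k + 1 := ⟨σ (Fin.last n) - 1, by omega⟩
      rw [dlin_monomial, pderiv_monomial, dlin_monomial, Derivation.map_smul, FF, FF,
        erase_sub_last, apply_last_sub_last, hk]
      rw [show k + 1 - 1 = k by omega, pderiv_last_gg Finsupp.erase_same k, smul_smul]
      have hstab : gg n (σ.erase (Fin.last n)) k (σ.degree + 1)
          = gg n (σ.erase (Fin.last n)) k ((σ - Finsupp.single (Fin.last n) 1).degree + 1) := by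
        apply gg_stab
        · have := deg_mono (erase_le (Fin.last n) σ); omega
        · omega
        · have h1 : σ.erase (Fin.last n) ≤ σ - Finsupp.single (Fin.last n) 1 := by
            rw [← erase_sub_last]
            exact erase_le _ _
          have := deg_mono h1
          omega
        · omega
      rw [hstab]

/-- for `p ∈ 𝒜̇_{m-1}(ℝ^d)` (`d ≥ 2`, `m ≥ 2`), the vector field
`U = Δ_D^{-1} ∇p` (componentwise) satisfies `-ΔU + ∇p = 0` on `ℝ^d`,
`∇·U = ∂_y Δ_D^{-1}(p_y⁰)` on `ℝ^d` where `p_y⁰(x,y) = (∂_y p)(x,0)`, and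
`U(x,0) = 0` for all `x ∈ ℝ^{d-1}`. -/
theorem stmt4 (n m : ℕ) (hn : 1 ≤ n) (hm : 2 ≤ m)
    (p : MvPolynomial (Fin (n + 1)) ℝ) (hp : p.IsHomogeneous (m - 1))
    (hph : lapFull n p = 0) :
    (∀ k : Fin (n + 1),
      - lapFull n (deltaDInv n (pderiv (R := ℝ) k p)) + pderiv (R := ℝ) k p = 0) ∧
    (∑ k : Fin (n + 1), pderiv (R := ℝ) k (deltaDInv n (pderiv (R := ℝ) k p)))
      = pderiv (R := ℝ) (Fin.last n)
          (deltaDInv n (setY0 n (pderiv (R := ℝ) (Fin.last n) p))) ∧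
    (∀ (x : Fin n → ℝ) (k : Fin (n + 1)),
      eval (Fin.snoc x 0) (deltaDInv n (pderiv (R := ℝ) k p)) = 0) := by
  refine ⟨?_, ?_, ?_⟩
  · intro k
    rw [deltaDInv_eq, lapFull_dlin, neg_add_cancel]
  · simp only [deltaDInv_eq]
    rw [Fin.sum_univ_castSucc, pderiv_last_dlin]
    simp only [pderiv_cs_dlin]
    have hzero : (∑ i : Fin n,
          dlin n (pderiv (R := ℝ) i.castSucc (pderiv (R := ℝ) i.castSucc p)))
        + dlin n (pderiv (R := ℝ) (Fin.last n) (pderiv (R := ℝ) (Fin.last n) p)) = 0 := by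
      rw [← map_sum, ← map_add]
      have hl : (∑ i : Fin n, pderiv (R := ℝ) i.castSucc (pderiv (R := ℝ) i.castSucc p))
          + pderiv (R := ℝ) (Fin.last n) (pderiv (R := ℝ) (Fin.last n) p) = lapFull n p := by
        simp only [lapFull, LinearMap.add_apply, lapX, LinearMap.sum_apply,
          LinearMap.comp_apply, Derivation.coeFn_coe]
      rw [hl, hph, map_zero]
    rw [← add_assoc, hzero, zero_add]
  · intro x k
    exact eval_snoc_deltaDInv x _
end
end

section
/- Let d ≥ 2, m ≥ 2, and p ∈ 𝒜̇_{m-1}(ℝ^d). Define c_{m-1}(x) = −∫_0^{x_1} (∂_y p)(z, x_2,…,x_{d-1}, 0) dz (a homogeneous polynomial of degree m−1 in x), V₁(x,y) = Σ_{j≥0} ((−1)^j/(2j+1)!) ((Δ')^j c_{m-1})(x) y^{2j+1} (a finite sum), and V = (V₁, 0, …, 0) ∈ 𝒫̇_m(ℝ^d)^d. Then: −ΔV = 0 on ℝ^d; ∇·V = −∂_y Δ_D^{-1}(p_y⁰) on ℝ^d, where p_y⁰ ∈ 𝒫̇_{m-2}(ℝ^d) denotes the polynomial (x,y) ↦ (∂_y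 p)(x,0); and V(x,0) = 0 for all x ∈ ℝ^{d-1}. -/
open MvPolynomial

noncomputable section

/-- Integration in the first variable from `0` to `x₁`:
`(intX0 g)(x) = ∫_0^{x₁} g(z, x₂, …) dz`, given termwise on monomials by
`∫_0^{x₁} x₁^k dx₁ = x₁^{k+1}/(k+1)`. -/
def intX0 (n : ℕ) (g : MvPolynomial (Fin (n + 1)) ℝ) : MvPolynomial (Fin (n + 1)) ℝ :=
  ∑ σ ∈ g.support,
    (coeff σ g / ((σ 0 : ℝ) + 1)) • monomial (σ + Finsupp.single 0 1) (1 : ℝ)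

/-- `c_{m-1}(x) = -∫_0^{x₁} (∂_y p)(z, x₂,…,x_{d-1}, 0) dz`. -/
def cpoly (n : ℕ) (p : MvPolynomial (Fin (n + 1)) ℝ) : MvPolynomial (Fin (n + 1)) ℝ :=
  - intX0 n (setY0 n (pderiv (R := ℝ) (Fin.last n) p))

/-- `V₁(x,y) = Σ_{j≥0} ((-1)^j/(2j+1)!) ((Δ')^j c_{m-1})(x) y^{2j+1}` (a finite sum:
all terms with `j > m` vanish, so we truncate at `m`). -/
def V1 (n m : ℕ) (p : MvPolynomial (Fin (n + 1)) ℝ) : MvPolynomial (Fin (n + 1)) ℝ :=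
  ∑ j ∈ Finset.range (m + 1),
    ((-1 : ℝ) ^ j / ((2 * j + 1).factorial : ℝ)) •
      (((lapX n) ^ j) (cpoly n p) * (X (Fin.last n)) ^ (2 * j + 1))

namespace Aux

theorem pderiv_comm' {σ : Type*} [DecidableEq σ] (i j : σ) (f : MvPolynomial σ ℝ) :
    pderiv i (pderiv j f) = pderiv j (pderiv i f) := by
  rcases eq_or_ne i j with rfl | hij
  · rfl
  · rw [f.as_sum, map_sum, map_sum, map_sum, map_sum]
    refine Finset.sum_congr rfl fun s _ => ?_
    simp only [pderiv_monomial]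
    rw [show s - Finsupp.single j 1 - Finsupp.single i 1
        = s - Finsupp.single i 1 - Finsupp.single j 1 by
      ext a; simp only [Finsupp.coe_tsub, Pi.sub_apply]; omega]
    congr 1
    rw [Finsupp.tsub_apply, Finsupp.tsub_apply,
      Finsupp.single_eq_of_ne hij, Finsupp.single_eq_of_ne (Ne.symm hij)]
    push_cast [Nat.sub_zero]
    ring

theorem lapX_apply (n : ℕ) (f : MvPolynomial (Fin (n + 1)) ℝ) :
    lapX n f = ∑ i : Fin n, pderiv (R := ℝ) i.castSucc (pderiv (R := ℝ) i.castSucc f) := by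
  rw [lapX, LinearMap.sum_apply]; rfl

theorem lapFull_apply (n : ℕ) (f : MvPolynomial (Fin (n + 1)) ℝ) :
    lapFull n f = lapX n f
      + pderiv (R := ℝ) (Fin.last n) (pderiv (R := ℝ) (Fin.last n) f) := by
  rw [lapFull, LinearMap.add_apply]; rfl

theorem pderiv_lapX (n : ℕ) (i : Fin (n + 1)) (f : MvPolynomial (Fin (n + 1)) ℝ) :
    pderiv (R := ℝ) i (lapX n f) = lapX n (pderiv (R := ℝ) i f) := by
  rw [lapX_apply, lapX_apply, map_sum]
  refine Finset.sum_congr rfl fun k _ => ?_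
  rw [pderiv_comm' i, pderiv_comm' i]

theorem pderiv_lapX_pow (n : ℕ) (i : Fin (n + 1)) (j : ℕ) (f : MvPolynomial (Fin (n + 1)) ℝ) :
    pderiv (R := ℝ) i ((lapX n ^ j) f) = (lapX n ^ j) (pderiv (R := ℝ) i f) := by
  induction j generalizing f with
  | zero => simp
  | succ j ih =>
    rw [pow_succ, Module.End.mul_apply, Module.End.mul_apply, ih, pderiv_lapX]

theorem pderiv_of_isHom_zero {σ : Type*} [DecidableEq σ] {f : MvPolynomial σ ℝ}
    (hf : f.IsHomogeneous 0) (i : σ) : pderiv i f = 0 := by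
  have h := (totalDegree_eq_zero_iff σ f).1 ((totalDegree_zero_iff_isHomogeneous σ).2 hf)
  rw [f.as_sum, map_sum]
  refine Finset.sum_eq_zero fun s hs => ?_
  rw [pderiv_monomial, h s hs i]
  simp

theorem isHom_pderiv {σ : Type*} [DecidableEq σ] {f : MvPolynomial σ ℝ} {k : ℕ}
    (hf : f.IsHomogeneous k) (i : σ) : (pderiv i f).IsHomogeneous (k - 1) := by
  rcases Nat.eq_zero_or_pos k with rfl | hk
  · rw [pderiv_of_isHom_zero hf]; exact isHomogeneous_zero _ _ _
  rw [f.as_sum, map_sum]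
  refine IsHomogeneous.sum _ _ _ fun s hs => ?_
  rw [pderiv_monomial]
  rcases Nat.eq_zero_or_pos (s i) with h0 | hpos
  · rw [h0]; simpa using isHomogeneous_zero (σ := σ) ℝ (k - 1)
  · refine isHomogeneous_monomial _ ?_
    have hd : (Finsupp.weight 1) s = k := hf (mem_support_iff.1 hs)
    have hsplit : s = (s - Finsupp.single i 1) + Finsupp.single i 1 := by
      ext a; rcases eq_or_ne a i with rfl | ha
      · simp only [Finsupp.add_apply, Finsupp.tsub_apply, Finsupp.single_eq_same]; omega
      · simp [Finsupp.single_eq_of_ne' (Ne.symm ha)]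
    rw [Finsupp.degree_eq_weight_one]
    have hw1 : (Finsupp.weight (1 : σ → ℕ)) (Finsupp.single i 1) = 1 := by
      simp [Finsupp.weight_apply, Finsupp.sum_single_index]
    rw [← Pi.one_def]
    have := congrArg (Finsupp.weight (1 : σ → ℕ)) hsplit
    rw [map_add, hw1] at this
    omega

theorem isHom_lapX (n : ℕ) {f : MvPolynomial (Fin (n + 1)) ℝ} {k : ℕ}
    (hf : f.IsHomogeneous k) : (lapX n f).IsHomogeneous (k - 2) := by
  rw [lapX_apply]
  refine IsHomogeneous.sum _ _ _ fun i _ => ?_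
  have := isHom_pderiv (isHom_pderiv hf i.castSucc) i.castSucc
  simpa [Nat.sub_sub] using this

theorem lapX_of_lt_two (n : ℕ) {f : MvPolynomial (Fin (n + 1)) ℝ} {k : ℕ}
    (hf : f.IsHomogeneous k) (hk : k < 2) : lapX n f = 0 := by
  rw [lapX_apply]
  refine Finset.sum_eq_zero fun i _ => ?_
  interval_cases k
  · rw [pderiv_of_isHom_zero hf]; simp
  · exact pderiv_of_isHom_zero (by simpa using isHom_pderiv hf i.castSucc) i.castSucc

theorem lapX_pow_eq_zero (n : ℕ) {f : MvPolynomial (Fin (n + 1)) ℝ} {k : ℕ}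
    (hf : f.IsHomogeneous k) {j : ℕ} (hj : k < 2 * j) : (lapX n ^ j) f = 0 := by
  induction j generalizing f k with
  | zero => omega
  | succ j ih =>
    rw [pow_succ, Module.End.mul_apply]
    rcases lt_or_ge k 2 with h | h
    · rw [lapX_of_lt_two n hf h, map_zero]
    · exact ih (isHom_lapX n hf) (by omega)

theorem isHom_lapX_pow (n : ℕ) {f : MvPolynomial (Fin (n + 1)) ℝ} {k : ℕ}
    (hf : f.IsHomogeneous k) (j : ℕ) : ((lapX n ^ j) f).IsHomogeneous (k - 2 * j) := by
  induction j generalizing f k with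
  | zero => simpa using hf
  | succ j ih =>
    rw [pow_succ, Module.End.mul_apply]
    have := ih (isHom_lapX n hf)
    rw [show k - 2 - 2 * j = k - 2 * (j + 1) by omega] at this
    exact this

theorem hom_smul {n k : ℕ} {f : MvPolynomial (Fin (n+1)) ℝ} (c : ℝ) (h : f.IsHomogeneous k) :
    (c • f).IsHomogeneous k := (homogeneousSubmodule _ ℝ k).smul_mem c h

theorem degree_of_mem {n k : ℕ} {f : MvPolynomial (Fin (n+1)) ℝ} (hf : f.IsHomogeneous k)
    {τ : Fin (n+1) →₀ ℕ} (hτ : τ ∈ f.support) : τ.degree = k := by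
  rw [Finsupp.degree_eq_weight_one]
  exact hf (mem_support_iff.1 hτ)

theorem degree_single' {α : Type*} (i : α) (t : ℕ) : (Finsupp.single i t).degree = t := by
  rcases eq_or_ne t 0 with rfl | h
  · simp [Finsupp.degree]
  · exact Finsupp.degree_single i t

theorem setY0_monomial (n : ℕ) (τ : Fin (n+1) →₀ ℕ) (a : ℝ) :
    setY0 n (monomial τ a) = if τ (Fin.last n) = 0 then monomial τ a else 0 := by
  rw [setY0, aeval_monomial]
  split_ifs with h
  · rw [monomial_eq, algebraMap_eq]
    congr 1
    rw [Finsupp.prod, Finsupp.prod]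
    refine Finset.prod_congr rfl fun i hi => ?_
    have hne : i ≠ Fin.last n := by
      rintro rfl; exact (Finsupp.mem_support_iff.1 hi) h
    rw [if_neg hne]
  · rw [Finsupp.prod, Finset.prod_eq_zero (Finsupp.mem_support_iff.2 h), mul_zero]
    rw [if_pos rfl]
    exact zero_pow h

theorem coeff_setY0_eq_zero (n : ℕ) (f : MvPolynomial (Fin (n+1)) ℝ) {σ : Fin (n+1) →₀ ℕ}
    (hσ : σ (Fin.last n) ≠ 0) : coeff σ (setY0 n f) = 0 := by
  conv_lhs => rw [f.as_sum, map_sum]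
  rw [coeff_sum]
  refine Finset.sum_eq_zero fun τ _ => ?_
  rw [Aux.setY0_monomial]
  split_ifs with h
  · rw [coeff_monomial, if_neg]; rintro rfl; exact hσ h
  · exact coeff_zero σ

theorem setY0_last_eq_zero (n : ℕ) (f : MvPolynomial (Fin (n+1)) ℝ) :
    ∀ σ ∈ (setY0 n f).support, σ (Fin.last n) = 0 := by
  intro σ hσ
  by_contra h
  exact (mem_support_iff.1 hσ) (coeff_setY0_eq_zero n f h)

theorem isHom_setY0 (n : ℕ) {k : ℕ} {f : MvPolynomial (Fin (n+1)) ℝ}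
    (hf : f.IsHomogeneous k) : (setY0 n f).IsHomogeneous k := by
  conv_lhs => rw [f.as_sum, map_sum]
  refine IsHomogeneous.sum _ _ _ fun τ hτ => ?_
  rw [setY0_monomial]
  split_ifs
  · exact isHomogeneous_monomial _ (degree_of_mem hf hτ)
  · exact isHomogeneous_zero _ _ _

theorem isHom_intX0 (n : ℕ) {k : ℕ} {g : MvPolynomial (Fin (n+1)) ℝ}
    (hg : g.IsHomogeneous k) : (intX0 n g).IsHomogeneous (k + 1) := by
  refine IsHomogeneous.sum _ _ _ fun τ hτ => ?_
  refine hom_smul _ (isHomogeneous_monomial _ ?_)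
  have h1 : (τ + Finsupp.single 0 1).degree
      = τ.degree + (Finsupp.single (0 : Fin (n+1)) 1).degree := by
    simp only [Finsupp.degree_eq_weight_one, map_add]
  rw [h1, degree_of_mem hg hτ, degree_single']

theorem pderiv0_intX0 (n : ℕ) (g : MvPolynomial (Fin (n + 1)) ℝ) :
    pderiv (R := ℝ) 0 (intX0 n g) = g := by
  rw [intX0, map_sum]
  conv_rhs => rw [g.as_sum]
  refine Finset.sum_congr rfl fun σ _ => ?_
  rw [Derivation.map_smul, pderiv_monomial, add_tsub_cancel_right, one_mul, Finsupp.add_apply,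
    Finsupp.single_eq_same, smul_monomial]
  congr 1
  push_cast
  have : (σ 0 : ℝ) + 1 ≠ 0 := by positivity
  rw [smul_eq_mul]
  field_simp

theorem last_ne_zero {n : ℕ} (hn : 1 ≤ n) : Fin.last n ≠ 0 := by
  intro h
  have := congrArg Fin.val h
  simp [Fin.last] at this
  omega

theorem pderiv_last_intX0 (n : ℕ) (hn : 1 ≤ n) {g : MvPolynomial (Fin (n+1)) ℝ}
    (hg : ∀ σ ∈ g.support, σ (Fin.last n) = 0) :
    pderiv (R := ℝ) (Fin.last n) (intX0 n g) = 0 := by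
  rw [intX0, map_sum]
  refine Finset.sum_eq_zero fun σ hσ => ?_
  rw [Derivation.map_smul, pderiv_monomial, Finsupp.add_apply, hg σ hσ,
    Finsupp.single_eq_of_ne' (Ne.symm (last_ne_zero hn))]
  simp

theorem pderiv_mul_ypow {n : ℕ} {i : Fin (n+1)} (h : Fin.last n ≠ i)
    (A : MvPolynomial (Fin (n+1)) ℝ) (t : ℕ) :
    pderiv (R := ℝ) i (A * X (Fin.last n) ^ t)
      = pderiv (R := ℝ) i A * X (Fin.last n) ^ t := by
  rw [pderiv_mul, pderiv_pow, pderiv_X_of_ne h]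
  ring

theorem lapX_mul_ypow (n : ℕ) (A : MvPolynomial (Fin (n+1)) ℝ) (t : ℕ) :
    lapX n (A * X (Fin.last n) ^ t) = lapX n A * X (Fin.last n) ^ t := by
  rw [lapX_apply, lapX_apply, Finset.sum_mul]
  refine Finset.sum_congr rfl fun i _ => ?_
  rw [pderiv_mul_ypow (Fin.castSucc_lt_last i).ne', pderiv_mul_ypow (Fin.castSucc_lt_last i).ne']

theorem pderiv_last_mul_ypow {n : ℕ} {A : MvPolynomial (Fin (n+1)) ℝ}
    (hA : pderiv (R := ℝ) (Fin.last n) A = 0) (t : ℕ) :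
    pderiv (R := ℝ) (Fin.last n) (A * X (Fin.last n) ^ t)
      = (t : ℝ) • (A * X (Fin.last n) ^ (t - 1)) := by
  rw [pderiv_mul, hA, zero_mul, zero_add, pderiv_pow, pderiv_X_self, mul_one,
    smul_eq_C_mul]
  rw [show ((t : MvPolynomial (Fin (n+1)) ℝ)) = C (t : ℝ) by push_cast; rfl]
  ring

theorem fact21 (j : ℕ) : ((2*j+2).factorial : ℝ) = (2*j+2) * ((2*j+1).factorial : ℝ) := by
  rw [show 2*j+2 = (2*j+1)+1 by ring, Nat.factorial_succ]
  push_cast; ring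

theorem fact_ne (k : ℕ) : ((k.factorial : ℝ)) ≠ 0 := Nat.cast_ne_zero.2 (Nat.factorial_ne_zero _)

end Aux


/-- for `p ∈ 𝒜̇_{m-1}(ℝ^d)` (`d ≥ 2`, `m ≥ 2`), with the vector field
`V = (V₁, 0, …, 0)` built from `c_{m-1}`, one has: `c_{m-1} ∈ 𝒫̇_{m-1}`, `V ∈ 𝒫̇_m(ℝ^d)^d`,
`-ΔV = 0` on `ℝ^d`, `∇·V = -∂_y Δ_D^{-1}(p_y⁰)` where `p_y⁰(x,y) = (∂_y p)(x,0)`, and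
`V(x,0) = 0` for all `x ∈ ℝ^{d-1}`. -/
theorem stmt5 (n m : ℕ) (hn : 1 ≤ n) (hm : 2 ≤ m)
    (p : MvPolynomial (Fin (n + 1)) ℝ) (hp : p.IsHomogeneous (m - 1))
    (hph : lapFull n p = 0)
    (V : Fin (n + 1) → MvPolynomial (Fin (n + 1)) ℝ)
    (hV : V = fun k => if k = (0 : Fin (n + 1)) then V1 n m p else 0) :
    (cpoly n p).IsHomogeneous (m - 1) ∧
    (∀ k, (V k).IsHomogeneous m) ∧
    (∀ k, - lapFull n (V k) = 0) ∧
    (∑ k : Fin (n + 1), pderiv (R := ℝ) k (V k))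
      = - pderiv (R := ℝ) (Fin.last n)
          (deltaDInv n (setY0 n (pderiv (R := ℝ) (Fin.last n) p))) ∧
    (∀ (x : Fin n → ℝ) (k : Fin (n + 1)), eval (Fin.snoc x 0) (V k) = 0) := by
  have hlast0 : Fin.last n ≠ 0 := Aux.last_ne_zero hn
  set g : MvPolynomial (Fin (n+1)) ℝ := setY0 n (pderiv (R := ℝ) (Fin.last n) p) with hgdef
  set c : MvPolynomial (Fin (n+1)) ℝ := cpoly n p with hc
  have hcg : c = - intX0 n g := by rw [hc, cpoly, hgdef]
  have hgnoy : ∀ σ ∈ g.support, σ (Fin.last n) = 0 := Aux.setY0_last_eq_zero n _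
  have hghom : g.IsHomogeneous (m - 2) := by
    have := Aux.isHom_setY0 n (Aux.isHom_pderiv hp (Fin.last n))
    rwa [show m - 1 - 1 = m - 2 by omega] at this
  have hchom : c.IsHomogeneous (m - 1) := by
    rw [hcg]
    have := Aux.isHom_intX0 n hghom
    rw [show m - 2 + 1 = m - 1 by omega] at this
    exact (homogeneousSubmodule _ ℝ _).neg_mem this
  have hcy : pderiv (R := ℝ) (Fin.last n) c = 0 := by
    rw [hcg, map_neg, Aux.pderiv_last_intX0 n hn hgnoy, neg_zero]
  have hc0 : pderiv (R := ℝ) 0 c = -g := by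
    rw [hcg, map_neg, Aux.pderiv0_intX0]
  have hLcy : ∀ j : ℕ, pderiv (R := ℝ) (Fin.last n) ((lapX n ^ j) c) = 0 := fun j => by
    rw [Aux.pderiv_lapX_pow, hcy, map_zero]
  refine ⟨hchom, ?_, ?_, ?_, ?_⟩
  · -- homogeneity of V
    intro k
    simp only [hV]
    by_cases hk : k = 0
    · rw [if_pos hk, V1, ← hc]
      refine IsHomogeneous.sum _ _ _ fun j _ => ?_
      refine Aux.hom_smul _ ?_
      rcases le_or_gt (2*j) (m-1) with h | h
      · have h1 := Aux.isHom_lapX_pow n hchom j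
        have h2 : (X (Fin.last n) ^ (2*j+1) : MvPolynomial (Fin (n+1)) ℝ).IsHomogeneous
            (2*j+1) := by
          rw [X_pow_eq_monomial]
          exact isHomogeneous_monomial _ (Aux.degree_single' _ _)
        have := h1.mul h2
        rwa [show m - 1 - 2*j + (2*j+1) = m by omega] at this
      · rw [Aux.lapX_pow_eq_zero n hchom (by omega), zero_mul]
        exact isHomogeneous_zero _ _ _
    · rw [if_neg hk]
      exact isHomogeneous_zero _ _ _
  · -- harmonicity
    intro k
    simp only [hV]
    by_cases hk : k = 0
    swap
    · rw [if_neg hk]; simp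
    rw [if_pos hk, neg_eq_zero, V1, ← hc, map_sum]
    have hterm : ∀ j ∈ Finset.range (m+1),
        lapFull n (((-1:ℝ)^j / ((2*j+1).factorial : ℝ)) •
          ((lapX n ^ j) c * X (Fin.last n) ^ (2*j+1)))
        = ((-1:ℝ)^j / ((2*j+1).factorial : ℝ)) •
            ((lapX n ^ (j+1)) c * X (Fin.last n) ^ (2*j+1))
          + ((((2*j+1) * (2*j) : ℕ) : ℝ) * ((-1:ℝ)^j / ((2*j+1).factorial : ℝ))) •
            ((lapX n ^ j) c * X (Fin.last n) ^ (2*j-1)) := by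
      intro j _
      rw [Aux.lapFull_apply, map_smul, Aux.lapX_mul_ypow, ← Module.End.mul_apply, ← pow_succ']
      congr 1
      rw [Derivation.map_smul, Aux.pderiv_last_mul_ypow (hLcy j),
        show 2*j+1-1 = 2*j by omega, Derivation.map_smul, Derivation.map_smul,
        Aux.pderiv_last_mul_ypow (hLcy j), smul_smul, smul_smul]
      congr 1
      push_cast
      ring
    rw [Finset.sum_congr rfl hterm, Finset.sum_add_distrib]
    have hS2 : (∑ j ∈ Finset.range (m+1),
        ((((2*j+1) * (2*j) : ℕ) : ℝ) * ((-1:ℝ)^j / ((2*j+1).factorial : ℝ))) •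
          ((lapX n ^ j) c * X (Fin.last n) ^ (2*j-1)))
        = ∑ j ∈ Finset.range m,
            (-(((-1:ℝ)^j / ((2*j+1).factorial : ℝ)))) •
              ((lapX n ^ (j+1)) c * X (Fin.last n) ^ (2*j+1)) := by
      rw [Finset.sum_range_succ']
      have h0 : ((((2*0+1) * (2*0) : ℕ) : ℝ) * ((-1:ℝ)^0 / ((2*0+1).factorial : ℝ))) •
          ((lapX n ^ 0) c * X (Fin.last n) ^ (2*0-1)) = 0 := by
        norm_num
      rw [h0, add_zero]
      refine Finset.sum_congr rfl fun j _ => ?_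
      rw [show 2*(j+1)-1 = 2*j+1 by omega]
      congr 1
      have h1 : ((2*(j+1)+1).factorial : ℝ)
          = (2*(j+1)+1) * ((2*(j+1)) * ((2*j+1).factorial : ℝ)) := by
        rw [show 2*(j+1)+1 = (2*j+2)+1 by ring, Nat.factorial_succ,
          show 2*j+2 = (2*j+1)+1 by ring, Nat.factorial_succ]
        push_cast; ring
      rw [pow_succ]
      push_cast [h1]
      have h2 := Aux.fact_ne (2*j+1)
      field_simp
    rw [hS2, Finset.sum_range_succ,
      Aux.lapX_pow_eq_zero n hchom (show m - 1 < 2*(m+1) by omega), zero_mul, smul_zero,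
      add_zero, ← Finset.sum_add_distrib]
    refine Finset.sum_eq_zero fun j _ => ?_
    rw [neg_smul, add_neg_cancel]
  · -- divergence
    have hsum : (∑ k : Fin (n + 1), pderiv (R := ℝ) k (V k))
        = pderiv (R := ℝ) 0 (V1 n m p) := by
      simp only [hV]
      rw [Finset.sum_eq_single 0]
      · simp
      · intro k _ hk; simp [hk]
      · simp
    rw [hsum]
    have hLHS : pderiv (R := ℝ) 0 (V1 n m p)
        = - ∑ j ∈ Finset.range (m+1), ((-1:ℝ)^j / ((2*j+1).factorial : ℝ)) •
            ((lapX n ^ j) g * X (Fin.last n) ^ (2*j+1)) := by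
      rw [V1, ← hc, map_sum, ← Finset.sum_neg_distrib]
      refine Finset.sum_congr rfl fun j _ => ?_
      rw [Derivation.map_smul, Aux.pderiv_mul_ypow hlast0, Aux.pderiv_lapX_pow, hc0,
        map_neg, neg_mul, smul_neg]
    rw [hLHS, neg_inj]
    symm
    have hDD : deltaDInv n g = ∑ σ ∈ g.support, ∑ j ∈ Finset.range (m+1),
        (coeff σ g * ((-1:ℝ)^j / ((2*j+2).factorial : ℝ))) •
          ((lapX n ^ j) (monomial σ (1:ℝ)) * X (Fin.last n) ^ (2*j+2)) := by
      rw [deltaDInv]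
      refine Finset.sum_congr rfl fun σ hσ => ?_
      have h0 : σ (Fin.last n) = 0 := hgnoy σ hσ
      have herase : σ.erase (Fin.last n) = σ := by
        ext a
        rcases eq_or_ne a (Fin.last n) with rfl | ha
        · rw [Finsupp.erase_same, h0]
        · rw [Finsupp.erase_ne ha]
      have hdeg : (σ.sum fun _ e => e) = m - 2 := by
        have h := Aux.degree_of_mem hghom hσ
        rw [Finsupp.degree] at h
        rw [Finsupp.sum]
        exact h
      have hmono : (monomial σ (1:ℝ)).IsHomogeneous (m-2) :=
        isHomogeneous_monomial _ (Aux.degree_of_mem hghom hσ)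
      rw [hdeg, herase]
      rw [Finset.sum_subset (Finset.range_subset_range.2 (show m - 2 + 1 ≤ m + 1 by omega))]
      · refine Finset.sum_congr rfl fun j _ => ?_
        rw [h0]
        norm_num
      · intro j _ hj
        rw [Aux.lapX_pow_eq_zero n hmono (show m - 2 < 2*j by
          simp only [Finset.mem_range] at hj; omega), zero_mul, smul_zero]
    rw [hDD, map_sum]
    have hstep : ∀ σ ∈ g.support,
        pderiv (R := ℝ) (Fin.last n) (∑ j ∈ Finset.range (m+1),
          (coeff σ g * ((-1:ℝ)^j / ((2*j+2).factorial : ℝ))) •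
            ((lapX n ^ j) (monomial σ (1:ℝ)) * X (Fin.last n) ^ (2*j+2)))
        = ∑ j ∈ Finset.range (m+1),
            ((-1:ℝ)^j / ((2*j+1).factorial : ℝ)) •
              (coeff σ g • ((lapX n ^ j) (monomial σ (1:ℝ)) * X (Fin.last n) ^ (2*j+1))) := by
      intro σ hσ
      rw [map_sum]
      refine Finset.sum_congr rfl fun j _ => ?_
      have hA : pderiv (R := ℝ) (Fin.last n) ((lapX n ^ j) (monomial σ (1:ℝ))) = 0 := by
        rw [Aux.pderiv_lapX_pow, pderiv_monomial, hgnoy σ hσ]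
        simp
      rw [Derivation.map_smul, Aux.pderiv_last_mul_ypow hA, show 2*j+2-1 = 2*j+1 by omega,
        smul_smul, smul_smul]
      congr 1
      rw [Aux.fact21 j]
      have h1 := Aux.fact_ne (2*j+1)
      have h22 : ((2*j+2 : ℕ) : ℝ) ≠ 0 := by positivity
      push_cast
      field_simp
    rw [Finset.sum_congr rfl hstep, Finset.sum_comm]
    refine Finset.sum_congr rfl fun j _ => ?_
    rw [← Finset.smul_sum]
    congr 1
    conv_rhs => rw [g.as_sum]
    rw [map_sum, Finset.sum_mul]
    refine Finset.sum_congr rfl fun σ _ => ?_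
    rw [show (monomial σ) (coeff σ g) = coeff σ g • (monomial σ (1:ℝ)) by
      rw [smul_monomial, smul_eq_mul, mul_one], map_smul, smul_mul_assoc]
  · -- boundary value
    intro x k
    simp only [hV]
    by_cases hk : k = 0
    · rw [if_pos hk, V1, ← hc, map_sum]
      refine Finset.sum_eq_zero fun j _ => ?_
      rw [smul_eq_C_mul, map_mul, map_mul, map_pow, eval_X, Fin.snoc_last]
      simp
    · rw [if_neg hk]; simp
end
end
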